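/- arXiv:2002.11007 — 2 statements merged into one kernel-verified Lean document; each statement's English description precedes it below -/
import Mathlib

section
/- Telescoping cohomology identity: let T : X → X be a map, g : X → ℝ, π : X → X with the property that the series p(x) = ∑_{n=0}^∞ [g(Tⁿx) - g(Tⁿ(πx))] converges absolutely for every x, and suppose π∘T = π∘T∘π (π projects along 'stable' directions so that π(Tx) and T(πx) define the same further orbit sums). Define g̃(x) = g(πx) + ∑_{n=0}^∞ [g(T^{n+1}(πx)) - g(Tⁿ(π(Tx)))], assuming this series converges absolutely. Then g(x) = g̃(x) + p(x) - p(Tx) for all x. -/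
/-- Writing `a n = u n - v n`, the summand `v (n + 1) - w n` equals `(u (n + 1) - w n) - a (n + 1)`,
so the three series telescope to `u 0 - v 0`. -/
theorem eq_add_tsum_sub_tsum_of_summable {G : Type*} [AddCommGroup G] [TopologicalSpace G]
    [IsTopologicalAddGroup G] [T2Space G] (u v w : ℕ → G)
    (huv : Summable fun n => u n - v n) (huw : Summable fun n => u (n + 1) - w n) :
    u 0 = (v 0 + ∑' n, (v (n + 1) - w n)) + ∑' n, (u n - v n) - ∑' n, (u (n + 1) - w n) := by
  have hshift : Summable fun n => u (n + 1) - v (n + 1) := (summable_nat_add_iff 1).mpr huv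
  have hvw : ∑' n, (v (n + 1) - w n)
      = ∑' n, (u (n + 1) - w n) - ∑' n, (u (n + 1) - v (n + 1)) := by
    rw [← huw.tsum_sub hshift]
    exact tsum_congr fun n => by abel
  rw [hvw, huv.tsum_eq_zero_add]
  abel

theorem telescoping_cohomology_general
    {X : Type*} (T pr : X → X) (g : X → ℝ)
    (hp : ∀ x, Summable (fun n => |g (T^[n] x) - g (T^[n] (pr x))|)) :
    ∀ x, g x =
      (g (pr x) + ∑' n : ℕ, (g (T^[n+1] (pr x)) - g (T^[n] (pr (T x)))))
      + (∑' n : ℕ, (g (T^[n] x) - g (T^[n] (pr x))))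
      - (∑' n : ℕ, (g (T^[n] (T x)) - g (T^[n] (pr (T x))))) := fun x =>
  eq_add_tsum_sub_tsum_of_summable (fun n => g (T^[n] x)) (fun n => g (T^[n] (pr x)))
    (fun n => g (T^[n] (pr (T x)))) (hp x).of_abs (hp (T x)).of_abs

theorem telescoping_cohomology
    {X : Type*} (T pr : X → X) (g : X → ℝ)
    (hpr : pr ∘ T = pr ∘ T ∘ pr)
    (hp : ∀ x, Summable (fun n => |g (T^[n] x) - g (T^[n] (pr x))|))
    (hgt : ∀ x, Summable (fun n => |g (T^[n+1] (pr x)) - g (T^[n] (pr (T x)))|)) :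
    ∀ x, g x =
      (g (pr x) + ∑' n : ℕ, (g (T^[n+1] (pr x)) - g (T^[n] (pr (T x)))))
      + (∑' n : ℕ, (g (T^[n] x) - g (T^[n] (pr x))))
      - (∑' n : ℕ, (g (T^[n] (T x)) - g (T^[n] (pr (T x))))) :=
  telescoping_cohomology_general T pr g hp
end

section
/- For every ε > 0 there exists λ₀ > 0 such that for all λ ≥ λ₀ and all y ≥ 1: |∫_{-∞}^{λy} (√y / √(y - w/λ)) · (sin²w / w²) dw - π| < ε. -/
open MeasureTheory Real Filter Set Topology
open scoped FourierTransform Complex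

/-!
Writing `μ = λy`, the integrand is `(1 - w/μ)^(-1/2) · sin²w/w²`, so it suffices that its
integral over `w < μ` tends to `∫ sin²w/w² = π` as `μ → ∞`. On `w ≤ μ/2` the kernel is at most
`√2` and tends to `1`, so dominated convergence applies. On `[μ/2, μ)` we have
`sin²w/w² ≤ 4/μ²`, while the kernel integrates to at most `2μ` there, so this piece is `O(1/μ)`.
The value `π` comes from Fourier inversion at `0` for the tent `max (1 - |x|) 0`, whose Fourier
transform is `sin²(πξ)/(πξ)²`.
-/

def tent (x : ℝ) : ℝ := max (1 - |x|) 0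

@[fun_prop]
lemma continuous_tent : Continuous tent := by unfold tent; fun_prop

lemma tent_eq_zero {x : ℝ} (hx : x ∉ Icc (-1) 1) : tent x = 0 := by
  have : 1 ≤ |x| := not_lt.mp fun h ↦ hx (abs_le.mp h.le)
  simp [tent, this]

lemma tent_of_nonpos {x : ℝ} (hx : x ≤ 0) (h1 : -1 ≤ x) : tent x = 1 + x := by
  rw [tent, abs_of_nonpos hx, max_eq_left (by linarith)]; ring

lemma tent_of_nonneg {x : ℝ} (hx : 0 ≤ x) (h1 : x ≤ 1) : tent x = 1 - x := by
  rw [tent, abs_of_nonneg hx, max_eq_left (by linarith)]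

lemma hasCompactSupport_tent : HasCompactSupport tent :=
  .intro isCompact_Icc fun _ ↦ tent_eq_zero

lemma hasDerivAt_affine_mul_cexp {c : ℂ} (hc : c ≠ 0) (s : ℂ) (x : ℝ) :
    HasDerivAt (fun x : ℝ ↦ (1 + s * x) * cexp (c * x) / c - s * cexp (c * x) / c ^ 2)
      ((1 + s * x) * cexp (c * x)) x := by
  have hlin : HasDerivAt (fun x : ℝ ↦ (x : ℂ)) 1 x := (hasDerivAt_id x).ofReal_comp
  have hexp := ((hlin.const_mul c).cexp)
  have := (((hlin.const_mul s).const_add 1).mul hexp).div_const c |>.sub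
    ((hexp.const_mul s).div_const (c ^ 2))
  exact this.congr_deriv (by field_simp; ring)

lemma integral_affine_mul_cexp {c : ℂ} (hc : c ≠ 0) (s : ℂ) (a b : ℝ) :
    ∫ x in a..b, (1 + s * x) * cexp (c * x) =
      ((1 + s * b) * cexp (c * b) / c - s * cexp (c * b) / c ^ 2) -
        ((1 + s * a) * cexp (c * a) / c - s * cexp (c * a) / c ^ 2) :=
  intervalIntegral.integral_eq_sub_of_hasDerivAt (fun x _ ↦ hasDerivAt_affine_mul_cexp hc s x)
    (by apply Continuous.intervalIntegrable; fun_prop)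

lemma integral_cexp_mul_tent {c : ℂ} (hc : c ≠ 0) :
    ∫ x : ℝ, cexp (c * x) * tent x = (cexp c + cexp (-c) - 2) / c ^ 2 := by
  rw [← setIntegral_eq_integral_of_forall_compl_eq_zero fun x hx ↦ by
      rw [tent_eq_zero hx, Complex.ofReal_zero, mul_zero],
    integral_Icc_eq_integral_Ioc, ← intervalIntegral.integral_of_le (by norm_num),
    ← intervalIntegral.integral_add_adjacent_intervals (b := 0)
      (by apply Continuous.intervalIntegrable; fun_prop)
      (by apply Continuous.intervalIntegrable; fun_prop)]
  have hneg : ∫ x in (-1 : ℝ)..0, cexp (c * x) * tent x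
      = ∫ x in (-1 : ℝ)..0, (1 + 1 * x) * cexp (c * x) := by
    refine intervalIntegral.integral_congr fun x hx ↦ ?_
    rw [uIcc_of_le (by norm_num)] at hx
    simp [tent_of_nonpos hx.2 hx.1, mul_comm]
  have hpos : ∫ x in (0 : ℝ)..1, cexp (c * x) * tent x
      = ∫ x in (0 : ℝ)..1, (1 + (-1) * x) * cexp (c * x) := by
    refine intervalIntegral.integral_congr fun x hx ↦ ?_
    rw [uIcc_of_le (by norm_num)] at hx
    simp [tent_of_nonneg hx.1 hx.2, mul_comm, sub_eq_add_neg]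
  rw [hneg, hpos, integral_affine_mul_cexp hc, integral_affine_mul_cexp hc]
  push_cast
  simp only [mul_zero, Complex.exp_zero, mul_neg, mul_one]
  field_simp
  ring

lemma fourier_tent {w : ℝ} (hw : w ≠ 0) :
    𝓕 (fun x ↦ (tent x : ℂ)) w = ((sin (π * w) ^ 2 / (π * w) ^ 2 : ℝ) : ℂ) := by
  set z : ℂ := ((π * w : ℝ) : ℂ)
  have hz : z ≠ 0 := by simp [z, hw, pi_ne_zero]
  have hc : -2 * z * Complex.I ≠ 0 := by simp [hz]
  have hexp (v : ℝ) : cexp (↑(-2 * π * v * w) * Complex.I) • (tent v : ℂ)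
      = cexp (-2 * z * Complex.I * v) * tent v := by
    simp only [z, smul_eq_mul]; push_cast; ring_nf
  have hcos : cexp (-2 * z * Complex.I) + cexp (-(-2 * z * Complex.I)) =
      2 * Complex.cos (2 * z) := by
    rw [Complex.cos]; ring_nf
  rw [Real.fourier_real_eq_integral_exp_smul]
  simp_rw [hexp]
  rw [integral_cexp_mul_tent hc, hcos, Complex.cos_two_mul, Complex.cos_sq']
  simp only [z]
  push_cast
  field_simp
  ring_nf
  rw [Complex.I_sq]
  ring

lemma sin_sq_div_sq_le (w : ℝ) : sin w ^ 2 / w ^ 2 ≤ 2 / (1 + w ^ 2) := by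
  have hle_one : sin w ^ 2 / w ^ 2 ≤ 1 := div_le_one_of_le₀ sin_sq_le_sq (sq_nonneg w)
  rcases eq_or_ne w 0 with rfl | hw
  · simp
  rw [le_div_iff₀ (by positivity), mul_add, mul_one, div_mul_cancel₀ _ (pow_ne_zero 2 hw)]
  linarith [sin_sq_le_one w]

lemma integrable_sin_sq_div_sq : Integrable fun w : ℝ ↦ sin w ^ 2 / w ^ 2 := by
  refine ((integrable_inv_one_add_sq.const_mul 2).mono'
    (Measurable.aestronglyMeasurable (by fun_prop)) (.of_forall fun w ↦ ?_))
  rw [norm_of_nonneg (by positivity), ← div_eq_mul_inv]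
  exact sin_sq_div_sq_le w

theorem integral_sin_sq_div_sq : ∫ w : ℝ, sin w ^ 2 / w ^ 2 = π := by
  have hF : 𝓕 (fun x ↦ (tent x : ℂ)) =ᵐ[volume]
      fun w ↦ ((sin (π * w) ^ 2 / (π * w) ^ 2 : ℝ) : ℂ) :=
    Filter.mem_of_superset (compl_mem_ae_iff.mpr (measure_singleton 0)) fun _ ↦ fourier_tent
  have hint : Integrable (𝓕 fun x ↦ (tent x : ℂ)) :=
    ((integrable_sin_sq_div_sq.comp_mul_left' pi_ne_zero).ofReal).congr hF.symm
  have hinv := (continuous_tent.integrable_of_hasCompactSupport hasCompactSupport_tent).ofReal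
    |>.fourierInv_fourier_eq hint (v := 0) (by fun_prop)
  simp only [fourierInv_eq', inner_zero_right, mul_zero, Complex.ofReal_zero, zero_mul,
    Complex.exp_zero, one_smul] at hinv
  rw [integral_congr_ae hF, integral_complex_ofReal,
    Measure.integral_comp_mul_left (fun w ↦ sin w ^ 2 / w ^ 2)] at hinv
  simp only [abs_inv, smul_eq_mul, Complex.ofReal_mul, Complex.ofReal_inv, tent, abs_zero,
    sub_zero, zero_le_one, sup_of_le_left, Complex.ofReal_one] at hinv
  rw [abs_of_pos pi_pos, inv_mul_eq_one₀ (by exact_mod_cast pi_ne_zero)] at hinv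
  exact_mod_cast hinv.symm

lemma inv_sqrt_one_sub_div_le_sqrt_two {μ w : ℝ} (hμ : 0 < μ) (hw : w ≤ μ / 2) :
    (√(1 - w / μ))⁻¹ ≤ √2 := by
  have h : 2⁻¹ ≤ 1 - w / μ := by
    rw [le_sub_comm, div_le_iff₀ hμ]; linarith
  calc (√(1 - w / μ))⁻¹ ≤ (√2⁻¹)⁻¹ := inv_anti₀ (by positivity) (sqrt_le_sqrt h)
    _ = √2 := by rw [sqrt_inv, inv_inv]

lemma hasDerivAt_mul_sqrt_one_sub_div {μ w : ℝ} (hμ : 0 < μ) (hw : w < μ) :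
    HasDerivAt (fun w ↦ -2 * μ * √(1 - w / μ)) (√(1 - w / μ))⁻¹ w := by
  have hpos : 0 < 1 - w / μ := sub_pos.2 ((div_lt_one hμ).2 hw)
  exact (((hasDerivAt_id w).div_const μ).const_sub 1).sqrt hpos.ne' |>.const_mul (-2 * μ)
    |>.congr_deriv (by simp only [id]; field_simp)

lemma integral_inv_sqrt_one_sub_div {μ a : ℝ} (hμ : 0 < μ) (ha : a ≤ μ) :
    IntervalIntegrable (fun w ↦ (√(1 - w / μ))⁻¹) volume a μ ∧
      ∫ w in a..μ, (√(1 - w / μ))⁻¹ = 2 * μ * √(1 - a / μ) := by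
  have hcont : ContinuousOn (fun w ↦ -2 * μ * √(1 - w / μ)) (Icc a μ) := by fun_prop
  have hderiv : ∀ w ∈ Ioo a μ, HasDerivAt (fun w ↦ -2 * μ * √(1 - w / μ)) (√(1 - w / μ))⁻¹ w :=
    fun w hw ↦ hasDerivAt_mul_sqrt_one_sub_div hμ hw.2
  have hint : IntervalIntegrable (fun w ↦ (√(1 - w / μ))⁻¹) volume a μ :=
    intervalIntegral.intervalIntegrable_deriv_of_nonneg (by rwa [uIcc_of_le ha])
      (by simpa [ha] using hderiv) (fun _ _ ↦ by positivity)
  refine ⟨hint, ?_⟩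
  rw [intervalIntegral.integral_eq_sub_of_hasDerivAt_of_le ha hcont hderiv hint]
  simp [hμ.ne']

section

variable {f : ℝ → ℝ} {C μ : ℝ}

lemma abs_le_of_half_le (hdecay : ∀ w > 0, |f w| ≤ C / w ^ 2) (hμ : 0 < μ) {w : ℝ}
    (hw : μ / 2 ≤ w) : |f w| ≤ 4 * C / μ ^ 2 := by
  have hC : 0 ≤ C := by
    have := (abs_nonneg _).trans (hdecay μ hμ)
    rwa [le_div_iff₀ (by positivity), zero_mul] at this
  calc |f w| ≤ C / w ^ 2 := hdecay w (by linarith)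
    _ ≤ C / (μ / 2) ^ 2 := by gcongr
    _ = 4 * C / μ ^ 2 := by ring

lemma norm_inv_sqrt_mul_le_of_mem_Ico (hdecay : ∀ w > 0, |f w| ≤ C / w ^ 2) (hμ : 0 < μ)
    {w : ℝ} (hw : w ∈ Ico (μ / 2) μ) :
    ‖(√(1 - w / μ))⁻¹ * f w‖ ≤ 4 * C / μ ^ 2 * (√(1 - w / μ))⁻¹ := by
  rw [norm_mul, norm_inv, norm_of_nonneg (sqrt_nonneg _), norm_eq_abs, mul_comm]
  gcongr
  exact abs_le_of_half_le hdecay hμ hw.1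

lemma integrableOn_Ico_inv_sqrt_mul (hf : AEStronglyMeasurable f)
    (hdecay : ∀ w > 0, |f w| ≤ C / w ^ 2) (hμ : 0 < μ) :
    IntegrableOn (fun w ↦ (√(1 - w / μ))⁻¹ * f w) (Ico (μ / 2) μ) := by
  have hk := (intervalIntegrable_iff_integrableOn_Ico_of_le (by linarith)).mp
    (integral_inv_sqrt_one_sub_div hμ (a := μ / 2) (by linarith)).1
  refine (hk.const_mul (4 * C / μ ^ 2)).mono' ?_ ?_
  · exact ((Measurable.aestronglyMeasurable (by fun_prop)).mul hf).restrict
  · exact ae_restrict_of_forall_mem measurableSet_Ico fun w hw ↦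
      norm_inv_sqrt_mul_le_of_mem_Ico hdecay hμ hw

lemma abs_setIntegral_Ico_inv_sqrt_mul_le (hdecay : ∀ w > 0, |f w| ≤ C / w ^ 2) (hμ : 0 < μ) :
    |∫ w in Ico (μ / 2) μ, (√(1 - w / μ))⁻¹ * f w| ≤ 8 * C / μ := by
  obtain ⟨hk, hint⟩ := integral_inv_sqrt_one_sub_div hμ (a := μ / 2) (by linarith)
  have hC : 0 ≤ 4 * C / μ ^ 2 := (abs_nonneg _).trans (abs_le_of_half_le hdecay hμ le_rfl)
  calc |∫ w in Ico (μ / 2) μ, (√(1 - w / μ))⁻¹ * f w|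
      ≤ ∫ w in Ico (μ / 2) μ, 4 * C / μ ^ 2 * (√(1 - w / μ))⁻¹ :=
        norm_integral_le_of_norm_le
          (((intervalIntegrable_iff_integrableOn_Ico_of_le (by linarith)).mp hk).const_mul _)
          (ae_restrict_of_forall_mem measurableSet_Ico fun w hw ↦
            norm_inv_sqrt_mul_le_of_mem_Ico hdecay hμ hw)
    _ = 4 * C / μ ^ 2 * (2 * μ * √(1 - μ / 2 / μ)) := by
        rw [integral_const_mul, integral_Ico_eq_integral_Ioc, ← intervalIntegral.integral_of_le
          (by linarith), hint]
    _ ≤ 4 * C / μ ^ 2 * (2 * μ * 1) := by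
        gcongr
        exact sqrt_le_one.mpr (sub_le_self _ (by positivity))
    _ = 8 * C / μ := by field_simp; ring

lemma norm_inv_sqrt_mul_le_of_le_half (hμ : 0 < μ) {w : ℝ} (hw : w ≤ μ / 2) :
    ‖(√(1 - w / μ))⁻¹ * f w‖ ≤ √2 * ‖f w‖ := by
  rw [norm_mul, norm_inv, norm_of_nonneg (sqrt_nonneg _)]
  gcongr
  exact inv_sqrt_one_sub_div_le_sqrt_two hμ hw

lemma integrableOn_Iio_half_inv_sqrt_mul (hf : Integrable f) (hμ : 0 < μ) :
    IntegrableOn (fun w ↦ (√(1 - w / μ))⁻¹ * f w) (Iio (μ / 2)) :=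
  (hf.norm.const_mul √2).integrableOn.mono'
    ((Measurable.aestronglyMeasurable (by fun_prop)).mul hf.1).restrict
    (ae_restrict_of_forall_mem measurableSet_Iio fun _ hw ↦
      norm_inv_sqrt_mul_le_of_le_half hμ (le_of_lt hw))

lemma tendsto_setIntegral_Iio_half_inv_sqrt_mul (hf : Integrable f) :
    Tendsto (fun μ ↦ ∫ w in Iio (μ / 2), (√(1 - w / μ))⁻¹ * f w) atTop (𝓝 (∫ w, f w)) := by
  simp_rw [← integral_indicator measurableSet_Iio]
  refine tendsto_integral_filter_of_dominated_convergence (fun w ↦ √2 * ‖f w‖) ?_ ?_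
    (hf.norm.const_mul _) ?_
  · exact .of_forall fun μ ↦ ((Measurable.aestronglyMeasurable (by fun_prop)).mul hf.1).indicator
      measurableSet_Iio
  · filter_upwards [eventually_gt_atTop 0] with μ hμ
    refine .of_forall fun w ↦ ?_
    by_cases hw : w ∈ Iio (μ / 2)
    · rw [indicator_of_mem hw]
      exact norm_inv_sqrt_mul_le_of_le_half hμ (le_of_lt hw)
    · rw [indicator_of_notMem hw, norm_zero]
      positivity
  · refine .of_forall fun w ↦ ?_
    have hk : Tendsto (fun μ ↦ (√(1 - w / μ))⁻¹) atTop (𝓝 1) := by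
      simpa using ((tendsto_const_nhds.div_atTop tendsto_id).const_sub 1).sqrt.inv₀ (by simp)
    refine (one_mul (f w) ▸ hk.mul_const (f w)).congr' ?_
    filter_upwards [eventually_gt_atTop (2 * w)] with μ hμ
    rw [indicator_of_mem (by simp only [mem_Iio]; linarith)]

theorem tendsto_setIntegral_Iio_inv_sqrt_one_sub_div_mul (hf : Integrable f)
    (hdecay : ∀ w > 0, |f w| ≤ C / w ^ 2) :
    Tendsto (fun μ ↦ ∫ w in Iio μ, (√(1 - w / μ))⁻¹ * f w) atTop (𝓝 (∫ w, f w)) := by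
  have hsing : Tendsto (fun μ ↦ ∫ w in Ico (μ / 2) μ, (√(1 - w / μ))⁻¹ * f w) atTop (𝓝 0) :=
    squeeze_zero_norm' ((eventually_gt_atTop 0).mono fun μ hμ ↦
      abs_setIntegral_Ico_inv_sqrt_mul_le hdecay hμ)
      (tendsto_const_nhds.div_atTop tendsto_id)
  refine add_zero (∫ w, f w) ▸ (tendsto_setIntegral_Iio_half_inv_sqrt_mul hf).add hsing
    |>.congr' ?_
  filter_upwards [eventually_gt_atTop 0] with μ hμ
  rw [← setIntegral_union (Iio_disjoint_Ici le_rfl |>.mono_right Ico_subset_Ici_self)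
    measurableSet_Ico (integrableOn_Iio_half_inv_sqrt_mul hf hμ)
    (integrableOn_Ico_inv_sqrt_mul hf.1 hdecay hμ), Iio_union_Ico_eq_Iio (by linarith)]

end

lemma sqrt_div_sqrt_sub_div_eq {y lam w : ℝ} (hy : 0 < y) :
    √y / √(y - w / lam) = (√(1 - w / (lam * y)))⁻¹ := by
  rw [show y - w / lam = y * (1 - w / (lam * y)) by field_simp, sqrt_mul hy.le,
    div_mul_cancel_left₀ (sqrt_pos.2 hy).ne']

theorem kernel_integral_tends_to_pi :
    ∀ ε > 0, ∃ Λ > (0:ℝ), ∀ lam ≥ Λ, ∀ y ≥ (1:ℝ),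
      |(∫ w in Set.Iio (lam * y),
          (Real.sqrt y / Real.sqrt (y - w / lam)) *
            (Real.sin w ^ 2 / w ^ 2)) - Real.pi| < ε := by
  intro ε hε
  have hdecay : ∀ w > 0, |sin w ^ 2 / w ^ 2| ≤ 1 / w ^ 2 := fun w _ ↦ by
    rw [abs_of_nonneg (by positivity)]
    exact div_le_div_of_nonneg_right (sin_sq_le_one w) (sq_nonneg w)
  have hlim := tendsto_setIntegral_Iio_inv_sqrt_one_sub_div_mul integrable_sin_sq_div_sq hdecay
  rw [integral_sin_sq_div_sq] at hlim
  obtain ⟨M, hM⟩ := Metric.tendsto_atTop.mp hlim ε hε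
  refine ⟨max M 1, by positivity, fun lam hlam y hy ↦ ?_⟩
  have hMle : M ≤ lam * y := by nlinarith [le_max_left M 1, le_max_right M 1]
  simp_rw [sqrt_div_sqrt_sub_div_eq (lam := lam) (by linarith : 0 < y)]
  exact hM _ hMle
end
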